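/- Let (X, Y) be a centered bivariate Gaussian vector with unit variances and correlation ρ satisfying |ρ| ≤ 1/2. Then |E[sign(X) · sign(Y)] - (2/π)ρ| ≤ |ρ|³. -/

import Mathlib

open MeasureTheory ProbabilityTheory Real

/-- Law of a centered bivariate Gaussian vector with unit variances and correlation `ρ`. -/
noncomputable def biGaussian (ρ : ℝ) : Measure (ℝ × ℝ) :=
  if ρ = 1 then (gaussianReal 0 1).map (fun x => (x, x))
  else if ρ = -1 then (gaussianReal 0 1).map (fun x => (x, -x))
  else (volume : Measure (ℝ × ℝ)).withDensity fun p =>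
    ENNReal.ofReal ((2 * π * Real.sqrt (1 - ρ ^ 2))⁻¹ *
      Real.exp (-(p.1 ^ 2 + p.2 ^ 2 - 2 * ρ * p.1 * p.2) / (2 * (1 - ρ ^ 2))))

/-!
The shear `(x, y) ↦ (x, ρ x + √(1 - ρ²) y)` carries the standard Gaussian on `ℝ²` to
`biGaussian ρ`. In polar coordinates `(r, θ)` the integrand `sign x * sign (ρ x + √(1 - ρ²) y)`
no longer depends on `r` and equals `sign (cos θ) * sign (sin (θ + arcsin ρ))`, whose mean over
the circle is `(2 / π) arcsin ρ` (Sheppard's formula). Finally `arcsin' t - 1 ≤ t²` for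
`|t| ≤ 1 / 2`, so the mean value theorem gives `|arcsin ρ - ρ| ≤ |ρ|³`, and `2 / π ≤ 1`.
-/

namespace Real

lemma measurable_sign : Measurable Real.sign :=
  measurable_const.piecewise measurableSet_Iio <|
    measurable_const.piecewise measurableSet_Ioi measurable_const

lemma abs_sign_le_one (x : ℝ) : |Real.sign x| ≤ 1 := by
  rcases sign_apply_eq x with h | h | h <;> simp [h]

lemma sign_mul_of_pos_left {r : ℝ} (hr : 0 < r) (x : ℝ) : Real.sign (r * x) = Real.sign x := by
  rcases lt_trichotomy x 0 with h | rfl | h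
  · rw [sign_of_neg h, sign_of_neg (mul_neg_of_pos_of_neg hr h)]
  · simp
  · rw [sign_of_pos h, sign_of_pos (mul_pos hr h)]

lemma one_div_sqrt_one_sub_le {u : ℝ} (hu₀ : 0 ≤ u) (hu : u ≤ 1 / 2) :
    1 / √(1 - u) ≤ 1 + u := by
  have ht : 0 < √(1 - u) := sqrt_pos.2 (by linarith)
  have ht2 : √(1 - u) ^ 2 = 1 - u := sq_sqrt (by linarith)
  have ht1 : √(1 - u) ≤ 1 := sqrt_le_one.2 (by linarith)
  rw [div_le_iff₀ ht]
  nlinarith [mul_nonneg (sub_nonneg.2 ht1) ht.le]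

lemma abs_arcsin_sub_self_le {x : ℝ} (hx : |x| ≤ 1 / 2) : |arcsin x - x| ≤ |x| ^ 3 := by
  have hderiv : ∀ t ∈ Set.Icc (-|x|) |x|,
      HasDerivWithinAt (fun t => arcsin t - t) (1 / √(1 - t ^ 2) - 1) (Set.Icc (-|x|) |x|) t := by
    intro t ht
    obtain ⟨hlo, hhi⟩ := abs_le.1 ((abs_le.2 ht).trans hx)
    exact ((hasDerivAt_arcsin (by linarith : -1 < t).ne' (by linarith : t < 1).ne).sub
      (hasDerivAt_id t)).hasDerivWithinAt
  have hbound : ∀ t ∈ Set.Icc (-|x|) |x|, ‖1 / √(1 - t ^ 2) - 1‖ ≤ x ^ 2 := by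
    intro t ht
    have ht2 : t ^ 2 ≤ x ^ 2 := sq_le_sq.2 (by simpa using abs_le.2 ht)
    have hx2 : x ^ 2 ≤ 1 / 4 := by nlinarith [sq_abs x, abs_nonneg x]
    have hlow : 1 ≤ 1 / √(1 - t ^ 2) := by
      rw [one_le_div (sqrt_pos.2 (by nlinarith))]; exact sqrt_le_one.2 (by nlinarith)
    rw [norm_eq_abs, abs_of_nonneg (by linarith)]
    linarith [one_div_sqrt_one_sub_le (sq_nonneg t) (by linarith)]
  have := (convex_Icc (-|x|) |x|).norm_image_sub_le_of_norm_hasDerivWithin_le hderiv hbound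
    (x := 0) (y := x) (by simp) (by simp [neg_abs_le, le_abs_self])
  simpa [pow_succ, sq_abs] using this

end Real

lemma intervalIntegral_eq_of_forall_Ioo {E : Type*} [NormedAddCommGroup E] [NormedSpace ℝ E]
    [CompleteSpace E] {f : ℝ → E} {c d : ℝ} {v : E} (hcd : c ≤ d)
    (hf : ∀ x ∈ Set.Ioo c d, f x = v) : ∫ x in c..d, f x = (d - c) • v := by
  rw [intervalIntegral.integral_of_le hcd, integral_Ioc_eq_integral_Ioo,
    setIntegral_congr_fun measurableSet_Ioo hf, setIntegral_const, volume_real_Ioo_of_le hcd]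

/-- The integrand is `π`-periodic, and on `(-π / 2, π / 2)` it changes sign only at `-a`. -/
lemma integral_sign_cos_mul_sign_sin_add {a : ℝ} (ha : |a| ≤ π / 2) :
    ∫ θ in -π..π, Real.sign (cos θ) * Real.sign (sin (θ + a)) = 4 * a := by
  set g : ℝ → ℝ := fun θ => Real.sign (cos θ) * Real.sign (sin (θ + a))
  obtain ⟨ha₁, ha₂⟩ := abs_le.1 ha
  have hpi := pi_pos
  have hper : Function.Periodic g π := fun θ => by
    simp only [g, cos_add_pi, add_right_comm θ π a, sin_add_pi, Real.sign_neg, neg_mul_neg]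
  have hint : ∀ c d, IntervalIntegrable g volume c d := fun c d =>
    intervalIntegrable_const.mono_fun'
      ((Real.measurable_sign.comp measurable_cos).mul (Real.measurable_sign.comp
        (measurable_sin.comp (measurable_id.add_const a)))).aestronglyMeasurable
      (Filter.Eventually.of_forall fun θ => by
        simpa [g, abs_mul] using
          mul_le_one₀ (Real.abs_sign_le_one _) (abs_nonneg _) (Real.abs_sign_le_one _))
  have hhalf : ∀ t, ∫ θ in t..t + π, g θ = ∫ θ in -(π / 2)..π / 2, g θ := fun t => by
    rw [hper.intervalIntegral_add_eq t (-(π / 2))]; ring_nf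
  have hneg : ∫ θ in -(π / 2)..-a, g θ = (-a - -(π / 2)) • (-1 : ℝ) := by
    refine intervalIntegral_eq_of_forall_Ioo (by linarith) fun θ ⟨h₁, h₂⟩ => ?_
    simp only [g, Real.sign_of_pos (cos_pos_of_mem_Ioo ⟨h₁, by linarith⟩), one_mul,
      Real.sign_of_neg (sin_neg_of_neg_of_neg_pi_lt (x := θ + a) (by linarith) (by linarith))]
  have hpos : ∫ θ in -a..π / 2, g θ = (π / 2 - -a) • (1 : ℝ) := by
    refine intervalIntegral_eq_of_forall_Ioo (by linarith) fun θ ⟨h₁, h₂⟩ => ?_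
    simp only [g, Real.sign_of_pos (cos_pos_of_mem_Ioo ⟨by linarith, h₂⟩), one_mul,
      Real.sign_of_pos (sin_pos_of_pos_of_lt_pi (x := θ + a) (by linarith) (by linarith))]
  calc ∫ θ in -π..π, g θ = (∫ θ in -π..-π + π, g θ) + ∫ θ in 0..0 + π, g θ := by
        rw [neg_add_cancel, zero_add,
          intervalIntegral.integral_add_adjacent_intervals (hint _ _) (hint _ _)]
    _ = 2 * ((∫ θ in -(π / 2)..-a, g θ) + ∫ θ in -a..π / 2, g θ) := by
        rw [hhalf, hhalf, intervalIntegral.integral_add_adjacent_intervals (hint _ _) (hint _ _)]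
        ring
    _ = 4 * a := by rw [hneg, hpos, smul_eq_mul, smul_eq_mul]; ring

lemma integral_Ioi_mul_exp_neg_sq_div_two :
    ∫ r in Set.Ioi (0 : ℝ), r * exp (-(r ^ 2) / 2) = 1 := by
  have h := integral_mul_cexp_neg_mul_sq (b := 1 / 2) (by norm_num)
  norm_num at h
  rw [← Complex.ofReal_inj]
  convert h using 1
  · rw [← integral_complex_ofReal]
    push_cast
    congr 1 with r
    congr 2
    ring
  · norm_num

lemma integral_exp_neg_sq_mul_of_scale_invariant {f : ℝ × ℝ → ℝ}
    (hf : ∀ r : ℝ, 0 < r → ∀ p, f (r • p) = f p) :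
    ∫ p : ℝ × ℝ, exp (-(p.1 ^ 2 + p.2 ^ 2) / 2) * f p = ∫ θ in -π..π, f (cos θ, sin θ) := by
  rw [← integral_comp_polarCoord_symm]
  calc ∫ p in polarCoord.target, p.1 • (exp (-((polarCoord.symm p).1 ^ 2
          + (polarCoord.symm p).2 ^ 2) / 2) * f (polarCoord.symm p))
      = ∫ p in Set.Ioi 0 ×ˢ Set.Ioo (-π) π,
          (p.1 * exp (-(p.1 ^ 2) / 2)) * f (cos p.2, sin p.2) := by
        refine setIntegral_congr_fun (measurableSet_Ioi.prod measurableSet_Ioo) fun p hp => ?_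
        have h : polarCoord.symm p = p.1 • (cos p.2, sin p.2) := by
          simp [polarCoord_symm_apply]
        have h2 : (p.1 * cos p.2) ^ 2 + (p.1 * sin p.2) ^ 2 = p.1 ^ 2 := by
          linear_combination p.1 ^ 2 * cos_sq_add_sin_sq p.2
        rw [h, hf p.1 hp.1, smul_eq_mul, Prod.smul_fst, Prod.smul_snd, smul_eq_mul, smul_eq_mul,
          h2, mul_assoc]
    _ = (∫ r in Set.Ioi 0, r * exp (-(r ^ 2) / 2)) * ∫ θ in Set.Ioo (-π) π, f (cos θ, sin θ) := by
        rw [Measure.volume_eq_prod]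
        exact setIntegral_prod_mul (fun r : ℝ => r * exp (-(r ^ 2) / 2))
          (fun θ => f (cos θ, sin θ)) _ _
    _ = ∫ θ in -π..π, f (cos θ, sin θ) := by
        rw [integral_Ioi_mul_exp_neg_sq_div_two, one_mul,
          intervalIntegral.integral_of_le (by linarith [pi_pos]), integral_Ioc_eq_integral_Ioo]

lemma integral_comp_shear {E : Type*} [NormedAddCommGroup E] [NormedSpace ℝ E] {s : ℝ}
    (hs : 0 < s) (ρ : ℝ) (f : ℝ × ℝ → E) :
    ∫ p : ℝ × ℝ, f (p.1, ρ * p.1 + s * p.2) = s⁻¹ • ∫ p, f p := by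
  let T : ℝ × ℝ →L[ℝ] ℝ × ℝ := LinearMap.toContinuousLinearMap
    (Matrix.toLin (Module.Basis.finTwoProd ℝ) (Module.Basis.finTwoProd ℝ) !![1, 0; ρ, s])
  have hT : ∀ p, T p = (p.1, ρ * p.1 + s * p.2) := fun p => by
    simp [T, Matrix.toLin_finTwoProd_apply]
  have hdet : LinearMap.det (T : ℝ × ℝ →ₗ[ℝ] ℝ × ℝ) = s := by
    simp [T, LinearMap.det_toLin, Matrix.det_fin_two_of]
  have hdet₀ : LinearMap.det (T : ℝ × ℝ →ₗ[ℝ] ℝ × ℝ) ≠ 0 := hdet ▸ hs.ne'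
  have hemb : MeasurableEmbedding T :=
    (T.toContinuousLinearEquivOfDetNeZero hdet₀).toHomeomorph.measurableEmbedding
  simp_rw [← hT]
  rw [← hemb.integral_map, ← ContinuousLinearMap.coe_coe,
    Measure.map_linearMap_addHaar_eq_smul_addHaar volume hdet₀, integral_smul_measure,
    hdet, abs_of_pos (inv_pos.2 hs), ENNReal.toReal_ofReal (inv_pos.2 hs).le]

lemma integral_biGaussian {ρ : ℝ} (hρ : |ρ| < 1) (f : ℝ × ℝ → ℝ) :
    ∫ p, f p ∂biGaussian ρ = (2 * π)⁻¹ *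
      ∫ p : ℝ × ℝ, exp (-(p.1 ^ 2 + p.2 ^ 2) / 2) * f (p.1, ρ * p.1 + √(1 - ρ ^ 2) * p.2) := by
  obtain ⟨hρ₁, hρ₂⟩ := abs_lt.1 hρ
  have hρ2 : 0 < 1 - ρ ^ 2 := by nlinarith
  rw [biGaussian, if_neg hρ₂.ne, if_neg hρ₁.ne']
  set s := √(1 - ρ ^ 2)
  have hs : 0 < s := sqrt_pos.2 hρ2
  have hs2 : s ^ 2 = 1 - ρ ^ 2 := sq_sqrt hρ2.le
  set d : ℝ × ℝ → ℝ := fun p => (2 * π * s)⁻¹ *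
    exp (-(p.1 ^ 2 + p.2 ^ 2 - 2 * ρ * p.1 * p.2) / (2 * (1 - ρ ^ 2)))
  have hd : Measurable d := by fun_prop
  have hd_nonneg : ∀ p, 0 ≤ d p := fun p => by positivity
  rw [integral_withDensity_eq_integral_toReal_smul
    hd.ennreal_ofReal (Filter.Eventually.of_forall fun _ => ENNReal.ofReal_lt_top)]
  simp only [ENNReal.toReal_ofReal (hd_nonneg _), smul_eq_mul]
  rw [← smul_inv_smul₀ hs.ne' (∫ p, d p * f p), ← integral_comp_shear hs ρ fun p => d p * f p,
    smul_eq_mul, ← integral_const_mul, ← integral_const_mul]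
  congr 1 with p
  have hexp : -(p.1 ^ 2 + (ρ * p.1 + s * p.2) ^ 2 - 2 * ρ * p.1 * (ρ * p.1 + s * p.2))
      / (2 * (1 - ρ ^ 2)) = -(p.1 ^ 2 + p.2 ^ 2) / 2 := by
    field_simp
    linear_combination (-p.2 ^ 2) * hs2
  simp only [d, hexp]
  field_simp

lemma integral_sign_mul_sign_biGaussian {ρ : ℝ} (hρ : |ρ| < 1) :
    ∫ p, Real.sign p.1 * Real.sign p.2 ∂biGaussian ρ = 2 / π * arcsin ρ := by
  obtain ⟨hρ₁, hρ₂⟩ := abs_le.1 hρ.le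
  have hsin : ∀ θ, ρ * cos θ + √(1 - ρ ^ 2) * sin θ = sin (θ + arcsin ρ) := fun θ => by
    rw [sin_add, sin_arcsin hρ₁ hρ₂, cos_arcsin]
    ring
  rw [integral_biGaussian hρ, integral_exp_neg_sq_mul_of_scale_invariant]
  · simp only [hsin]
    rw [integral_sign_cos_mul_sign_sin_add
      (abs_le.2 ⟨neg_pi_div_two_le_arcsin ρ, arcsin_le_pi_div_two ρ⟩)]
    field_simp
    ring
  · intro r hr p
    simp only [Prod.smul_fst, Prod.smul_snd, smul_eq_mul, Real.sign_mul_of_pos_left hr]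
    rw [← Real.sign_mul_of_pos_left hr (ρ * p.1 + _)]
    ring_nf

theorem sign_sign_expectation_approx_general {Ω : Type*} [MeasurableSpace Ω] (μ : Measure Ω)
    (X Y : Ω → ℝ) (hX : Measurable X) (hY : Measurable Y)
    (ρ : ℝ) (hρ : |ρ| ≤ 1 / 2)
    (hlaw : μ.map (fun ω => (X ω, Y ω)) = biGaussian ρ) :
    |(∫ ω, Real.sign (X ω) * Real.sign (Y ω) ∂μ) - (2 / π) * ρ| ≤ |ρ| ^ 3 := by
  have hmeas : Measurable fun p : ℝ × ℝ => Real.sign p.1 * Real.sign p.2 :=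
    (Real.measurable_sign.comp measurable_fst).mul (Real.measurable_sign.comp measurable_snd)
  rw [← integral_map (f := fun p : ℝ × ℝ => Real.sign p.1 * Real.sign p.2)
    (hX.prodMk hY).aemeasurable hmeas.aestronglyMeasurable, hlaw,
    integral_sign_mul_sign_biGaussian (by linarith), ← mul_sub, abs_mul,
    abs_of_pos (by positivity : (0 : ℝ) < 2 / π)]
  calc 2 / π * |arcsin ρ - ρ| ≤ 1 * |ρ| ^ 3 :=
        mul_le_mul ((div_le_one pi_pos).2 two_le_pi) (Real.abs_arcsin_sub_self_le hρ)
          (abs_nonneg _) zero_le_one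
    _ = |ρ| ^ 3 := one_mul _

theorem sign_sign_expectation_approx {Ω : Type*} [MeasurableSpace Ω] (μ : Measure Ω)
    [IsProbabilityMeasure μ] (X Y : Ω → ℝ) (hX : Measurable X) (hY : Measurable Y)
    (ρ : ℝ) (hρ : |ρ| ≤ 1 / 2)
    (hlaw : μ.map (fun ω => (X ω, Y ω)) = biGaussian ρ) :
    |(∫ ω, Real.sign (X ω) * Real.sign (Y ω) ∂μ) - (2 / π) * ρ| ≤ |ρ| ^ 3 :=
  sign_sign_expectation_approx_general μ X Y hX hY ρ hρ hlaw
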